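/- For any ∀⁺ type A of System F, the set |A| is stable under β-equivalence: if t ∈ |A| and t ≃_β t', then t' ∈ |A|. -/

import Mathlib

/-! Untyped λ-calculus (de Bruijn) and System F realizability semantics. -/

/-- Untyped λ-terms in de Bruijn notation. -/
inductive Lam : Type
  | var : ℕ → Lam
  | app : Lam → Lam → Lam
  | lam : Lam → Lam
deriving DecidableEq

namespace Lam

/-- Shift the free variables ≥ `d` up by one. -/
def lift (d : ℕ) : Lam → Lam
  | var n => if n < d then var n else var (n + 1)
  | app t u => app (lift d t) (lift d u)
  | lam t => lam (lift (d + 1) t)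

/-- Capture-avoiding substitution of `u` for the variable `k` (de Bruijn). -/
def subst : Lam → ℕ → Lam → Lam
  | var n, k, u => if n = k then u else if k < n then var (n - 1) else var n
  | app t s, k, u => app (subst t k u) (subst s k u)
  | lam t, k, u => lam (subst t (k + 1) (lift 0 u))

/-- Free variables of a term. -/
def fv : Lam → Finset ℕ
  | var n => {n}
  | app t u => fv t ∪ fv u
  | lam t => ((fv t).erase 0).image (· - 1)

/-- One-step β-reduction. -/
inductive Beta : Lam → Lam → Prop
  | beta (t u : Lam) : Beta (app (lam t) u) (subst t 0 u)
  | appL {t t' : Lam} (u : Lam) : Beta t t' → Beta (app t u) (app t' u)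
  | appR (t : Lam) {u u' : Lam} : Beta u u' → Beta (app t u) (app t u')
  | lam {t t' : Lam} : Beta t t' → Beta (lam t) (lam t')

/-- Many-step β-reduction. -/
def BetaStar : Lam → Lam → Prop := Relation.ReflTransGen Beta

/-- β-equivalence. -/
def BetaEq : Lam → Lam → Prop := Relation.EqvGen Beta

/-- One-step η-reduction. -/
inductive Eta : Lam → Lam → Prop
  | eta (t : Lam) : Eta (lam (app (lift 0 t) (var 0))) t
  | appL {t t' : Lam} (u : Lam) : Eta t t' → Eta (app t u) (app t' u)
  | appR (t : Lam) {u u' : Lam} : Eta u u' → Eta (app t u) (app t u')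
  | lam {t t' : Lam} : Eta t t' → Eta (lam t) (lam t')

/-- βη-equivalence. -/
def BetaEtaEq : Lam → Lam → Prop := Relation.EqvGen (fun t u => Beta t u ∨ Eta t u)

/-- One-step weak head reduction: contracts the weak head redex `(λ t) u`
possibly applied to further arguments. -/
inductive Whr : Lam → Lam → Prop
  | head (t u : Lam) : Whr (app (lam t) u) (subst t 0 u)
  | appL {t t' : Lam} (u : Lam) : Whr t t' → Whr (app t u) (app t' u)

/-- Many-step weak head reduction (`≻_f`). -/
def WhrStar : Lam → Lam → Prop := Relation.ReflTransGen Whr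

/-- A term is normal when it has no β-redex. -/
def Normal (t : Lam) : Prop := ∀ u, ¬ Beta t u

def Normalizable (t : Lam) : Prop := ∃ u, BetaStar t u ∧ Normal u

/-- `(t)v₁…vₘ`. -/
def appList (t : Lam) (l : List Lam) : Lam := l.foldl app t

end Lam

/-- A set of λ-terms is saturated when it is closed under weak-head-expansion. -/
def Saturated (G : Set Lam) : Prop := ∀ t u : Lam, Lam.WhrStar t u → u ∈ G → t ∈ G

/-- A set of λ-terms is β-saturated when it is closed under β-expansion. -/
def BetaSaturated (G : Set Lam) : Prop := ∀ t u : Lam, Lam.BetaStar t u → u ∈ G → t ∈ G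

/-- `G → G' = {u : ∀ t ∈ G, (u)t ∈ G'}`. -/
def arrowSet (G G' : Set Lam) : Set Lam := {u | ∀ t ∈ G, Lam.app u t ∈ G'}

/-- Types of System F (de Bruijn type variables). -/
inductive Ty : Type
  | var : ℕ → Ty
  | arr : Ty → Ty → Ty
  | all : Ty → Ty
deriving DecidableEq

namespace Ty

/-- Shift the free type variables ≥ `d` up by one. -/
def lift (d : ℕ) : Ty → Ty
  | var n => if n < d then var n else var (n + 1)
  | arr A B => arr (lift d A) (lift d B)
  | all A => all (lift (d + 1) A)

/-- Capture-avoiding substitution of the type `C` for the type variable `k`. -/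
def subst : Ty → ℕ → Ty → Ty
  | var n, k, C => if n = k then C else if k < n then var (n - 1) else var n
  | arr A B, k, C => arr (subst A k C) (subst B k C)
  | all A, k, C => all (subst A (k + 1) (lift 0 C))

/-- Free type variables. -/
def fv : Ty → Finset ℕ
  | var n => {n}
  | arr A B => fv A ∪ fv B
  | all A => ((fv A).erase 0).image (· - 1)

end Ty

mutual
  /-- ∀⁺ types: types with positive quantifiers. -/
  inductive PosTy : Ty → Prop
    | var (n : ℕ) : PosTy (Ty.var n)
    | arr {B A : Ty} : NegTy B → PosTy A → PosTy (Ty.arr B A)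
    | all {A : Ty} : PosTy A → 0 ∈ A.fv → PosTy (Ty.all A)
  /-- ∀⁻ types: types with negative quantifiers. -/
  inductive NegTy : Ty → Prop
    | var (n : ℕ) : NegTy (Ty.var n)
    | arr {B A : Ty} : PosTy B → NegTy A → NegTy (Ty.arr B A)
end

/-- Typing contexts: a partial assignment of types to (de Bruijn) term variables. -/
def Ctx : Type := ℕ → Option Ty

def Ctx.empty : Ctx := fun _ => none

def Ctx.cons (B : Ty) (Γ : Ctx) : Ctx := fun n =>
  match n with
  | 0 => some B
  | n + 1 => Γ n

/-- Shift all type variables of a context (used for ∀-introduction: the fresh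
type variable `0` does not occur in the shifted context). -/
def Ctx.liftTy (Γ : Ctx) : Ctx := fun n => (Γ n).map (Ty.lift 0)

/-- Curry-style typing of System F. -/
inductive TyJ : Ctx → Lam → Ty → Prop
  | var {Γ : Ctx} {x : ℕ} {A : Ty} : Γ x = some A → TyJ Γ (Lam.var x) A
  | lam {Γ : Ctx} {B C : Ty} {t : Lam} :
      TyJ (Ctx.cons B Γ) t C → TyJ Γ (Lam.lam t) (Ty.arr B C)
  | app {Γ : Ctx} {B C : Ty} {u v : Lam} :
      TyJ Γ u (Ty.arr B C) → TyJ Γ v B → TyJ Γ (Lam.app u v) C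
  | allI {Γ : Ctx} {A : Ty} {t : Lam} :
      TyJ (Ctx.liftTy Γ) t A → TyJ Γ t (Ty.all A)
  | allE {Γ : Ctx} {A : Ty} {t : Lam} (C : Ty) :
      TyJ Γ t (Ty.all A) → TyJ Γ t (Ty.subst A 0 C)

/-- System F0 : System F where ∀-elimination only instantiates by type variables. -/
inductive TyJ0 : Ctx → Lam → Ty → Prop
  | var {Γ : Ctx} {x : ℕ} {A : Ty} : Γ x = some A → TyJ0 Γ (Lam.var x) A
  | lam {Γ : Ctx} {B C : Ty} {t : Lam} :
      TyJ0 (Ctx.cons B Γ) t C → TyJ0 Γ (Lam.lam t) (Ty.arr B C)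
  | app {Γ : Ctx} {B C : Ty} {u v : Lam} :
      TyJ0 Γ u (Ty.arr B C) → TyJ0 Γ v B → TyJ0 Γ (Lam.app u v) C
  | allI {Γ : Ctx} {A : Ty} {t : Lam} :
      TyJ0 (Ctx.liftTy Γ) t A → TyJ0 Γ t (Ty.all A)
  | allE {Γ : Ctx} {A : Ty} {t : Lam} (Y : ℕ) :
      TyJ0 Γ t (Ty.all A) → TyJ0 Γ t (Ty.subst A 0 (Ty.var Y))

/-- Interpretations: assignments of sets of λ-terms to type variables. -/
def Interp : Type := ℕ → Set Lam

def Interp.cons (G : Set Lam) (I : Interp) : Interp := fun n =>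
  match n with
  | 0 => G
  | n + 1 => I n

/-- Interpretation of types, parameterized by the admissibility class `C` of
sets used to interpret type variables (e.g. `Saturated`). -/
def interpC (C : Set Lam → Prop) : Ty → Interp → Set Lam
  | Ty.var n, I => I n
  | Ty.arr A B, I => arrowSet (interpC C A I) (interpC C B I)
  | Ty.all A, I => ⋂ (G : Set Lam) (_ : C G), interpC C A (Interp.cons G I)

/-- Girard–Krivine interpretation `|A|_I` with saturated sets. -/
def interp : Ty → Interp → Set Lam := interpC Saturated

/-- `|A|`, the intersection of `|A|_I` over all admissible interpretations. -/
def SemC (C : Set Lam → Prop) (A : Ty) : Set Lam :=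
  {t | ∀ I : Interp, (∀ n, C (I n)) → t ∈ interpC C A I}

/-- `|A| = ⋂_I |A|_I` over interpretations into saturated sets. -/
def Sem (A : Ty) : Set Lam := SemC Saturated A

/-!
Interpret each type variable `X` syntactically, by the terms that weak-head reduce to a spine
`x p₁ ⋯ pₘ` whose head `x` is a variable reserved for a negative type `P₁ → ⋯ → Pₘ → X` and
whose arguments are canonical for the `Pᵢ` (`Canon`). Since `A` is ∀⁺, its negative argument
types are realized by their reserved variables, so every `t ∈ |A|` is canonical for `A` at this
interpretation. Conversely, anything β-equivalent to a canonical inhabitant of `A` lies in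
`|A|_I` for every saturated `I`: by Church–Rosser and standardization, a term β-equivalent to a
variable-headed spine weak-head reduces to such a spine with β-equivalent arguments, and
saturated sets are closed under weak-head expansion.
-/

namespace Relation.EqvGen

theorem lift {α β : Type*} {r : α → α → Prop} {p : β → β → Prop} (f : α → β)
    (h : ∀ a b, r a b → p (f a) (f b)) {a b : α} (hab : EqvGen r a b) :
    EqvGen p (f a) (f b) := by
  induction hab with
  | rel a b hab => exact .rel _ _ (h a b hab)
  | refl a => exact .refl _
  | symm a b _ ih => exact ih.symm
  | trans a b c _ _ ih₁ ih₂ => exact ih₁.trans _ _ _ ih₂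

end Relation.EqvGen

theorem List.Forall₂.comp {α β γ : Type*} {R : α → β → Prop} {S : β → γ → Prop}
    {T : α → γ → Prop} (h : ∀ a b c, R a b → S b c → T a c) {l₁ : List α} {l₂ : List β}
    {l₃ : List γ} (h₁ : Forall₂ R l₁ l₂) (h₂ : Forall₂ S l₂ l₃) : Forall₂ T l₁ l₃ := by
  induction h₁ generalizing l₃ with
  | nil => cases h₂; exact .nil
  | cons hab _ ih => cases h₂ with
    | cons hbc h₂ => exact .cons (h _ _ _ hab hbc) (ih h₂)

namespace Lam

/-! ### Substitution -/

def upRen (ρ : ℕ → ℕ) : ℕ → ℕ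
  | 0 => 0
  | n + 1 => ρ n + 1

def ren (ρ : ℕ → ℕ) : Lam → Lam
  | var n => var (ρ n)
  | app t u => app (ren ρ t) (ren ρ u)
  | lam t => lam (ren (upRen ρ) t)

def upSubst (σ : ℕ → Lam) : ℕ → Lam
  | 0 => var 0
  | n + 1 => ren Nat.succ (σ n)

def msubst (σ : ℕ → Lam) : Lam → Lam
  | var n => σ n
  | app t u => app (msubst σ t) (msubst σ u)
  | lam t => lam (msubst (upSubst σ) t)

theorem ren_congr {ρ ρ' : ℕ → ℕ} (h : ∀ n, ρ n = ρ' n) (t : Lam) : ren ρ t = ren ρ' t := by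
  induction t generalizing ρ ρ' with
  | var n => simp [ren, h]
  | app a b iha ihb => simp [ren, iha h, ihb h]
  | lam a ih => exact congrArg lam (ih fun n => by cases n <;> simp [upRen, h])

theorem msubst_congr {σ σ' : ℕ → Lam} (h : ∀ n, σ n = σ' n) (t : Lam) :
    msubst σ t = msubst σ' t := by
  induction t generalizing σ σ' with
  | var n => simp [msubst, h]
  | app a b iha ihb => simp [msubst, iha h, ihb h]
  | lam a ih => exact congrArg lam (ih fun n => by cases n <;> simp [upSubst, h])

theorem ren_ren (ρ ρ' : ℕ → ℕ) (t : Lam) : ren ρ' (ren ρ t) = ren (ρ' ∘ ρ) t := by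
  induction t generalizing ρ ρ' with
  | var n => rfl
  | app a b iha ihb => simp [ren, iha, ihb]
  | lam a ih =>
    simp only [ren, ih]
    exact congrArg lam (ren_congr (fun n => by cases n <;> rfl) a)

theorem msubst_ren (σ : ℕ → Lam) (ρ : ℕ → ℕ) (t : Lam) :
    msubst σ (ren ρ t) = msubst (σ ∘ ρ) t := by
  induction t generalizing ρ σ with
  | var n => rfl
  | app a b iha ihb => simp [ren, msubst, iha, ihb]
  | lam a ih =>
    simp only [ren, msubst, ih]
    exact congrArg lam (msubst_congr (fun n => by cases n <;> rfl) a)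

theorem ren_msubst (ρ : ℕ → ℕ) (σ : ℕ → Lam) (t : Lam) :
    ren ρ (msubst σ t) = msubst (ren ρ ∘ σ) t := by
  induction t generalizing ρ σ with
  | var n => rfl
  | app a b iha ihb => simp [ren, msubst, iha, ihb]
  | lam a ih =>
    simp only [ren, msubst, ih]
    congr 1
    refine msubst_congr (fun n => ?_) a
    cases n with
    | zero => rfl
    | succ n => simp only [Function.comp, upSubst, ren_ren]; exact ren_congr (fun _ => rfl) _

theorem msubst_msubst (σ σ' : ℕ → Lam) (t : Lam) :
    msubst σ' (msubst σ t) = msubst (msubst σ' ∘ σ) t := by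
  induction t generalizing σ σ' with
  | var n => rfl
  | app a b iha ihb => simp [msubst, iha, ihb]
  | lam a ih =>
    simp only [msubst, ih]
    congr 1
    refine msubst_congr (fun n => ?_) a
    cases n with
    | zero => rfl
    | succ n => simp only [Function.comp, upSubst, msubst_ren, ren_msubst]; rfl

theorem ren_eq_msubst (ρ : ℕ → ℕ) (t : Lam) : ren ρ t = msubst (var ∘ ρ) t := by
  induction t generalizing ρ with
  | var n => rfl
  | app a b iha ihb => simp [ren, msubst, iha, ihb]
  | lam a ih =>
    simp only [ren, msubst, ih]
    exact congrArg lam (msubst_congr (fun n => by cases n <;> rfl) a)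

theorem msubst_var (t : Lam) : msubst var t = t := by
  induction t with
  | var n => rfl
  | app a b iha ihb => simp [msubst, iha, ihb]
  | lam a ih =>
    simp only [msubst]
    rw [msubst_congr (σ' := var) (fun n => by cases n <;> rfl) a, ih]

theorem lift_eq_ren (d : ℕ) (t : Lam) :
    lift d t = ren (fun n => if n < d then n else n + 1) t := by
  induction t generalizing d with
  | var n => by_cases h : n < d <;> simp [lift, ren, h]
  | app a b iha ihb => simp [lift, ren, iha, ihb]
  | lam a ih =>
    simp only [lift, ren, ih]
    congr 1
    refine ren_congr (fun n => ?_) a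
    cases n <;> simp only [upRen] <;> split_ifs <;> omega

def substFn (k : ℕ) (u : Lam) (n : ℕ) : Lam :=
  if n = k then u else if k < n then var (n - 1) else var n

theorem subst_eq_msubst (t : Lam) (k : ℕ) (u : Lam) : subst t k u = msubst (substFn k u) t := by
  induction t generalizing k u with
  | var n => rfl
  | app a b iha ihb => simp [subst, msubst, iha, ihb]
  | lam a ih =>
    simp only [subst, msubst, ih]
    congr 1
    refine msubst_congr (fun n => ?_) a
    cases n with
    | zero => simp [upSubst, substFn]
    | succ n =>
      simp only [upSubst, substFn]
      rcases Nat.lt_trichotomy n k with h | rfl | h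
      · simp [show n ≠ k by omega, show ¬ k < n by omega, ren]
      · simp [lift_eq_ren]
      · simp [show n ≠ k by omega, h, ren]
        omega

theorem substFn_zero_succ (u : Lam) (n : ℕ) : substFn 0 u (n + 1) = var n := by
  simp [substFn]

theorem msubst_subst_zero (σ : ℕ → Lam) (t u : Lam) :
    msubst σ (subst t 0 u) = subst (msubst (upSubst σ) t) 0 (msubst σ u) := by
  simp only [subst_eq_msubst, msubst_msubst]
  refine msubst_congr (fun n => ?_) t
  cases n with
  | zero => rfl
  | succ n =>
    simp only [Function.comp_apply, substFn_zero_succ, upSubst, msubst_ren]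
    exact (msubst_var _).symm.trans (msubst_congr (fun m => (substFn_zero_succ _ m).symm) _)

theorem ren_subst_zero (ρ : ℕ → ℕ) (t u : Lam) :
    ren ρ (subst t 0 u) = subst (ren (upRen ρ) t) 0 (ren ρ u) := by
  simp only [ren_eq_msubst, msubst_subst_zero]
  congr 1
  exact msubst_congr (fun n => by cases n <;> rfl) t

theorem mem_fv_lam {t : Lam} {x : ℕ} : x ∈ fv (lam t) ↔ x + 1 ∈ fv t := by
  simp only [fv, Finset.mem_image, Finset.mem_erase]
  constructor
  · rintro ⟨y, ⟨hy0, hyt⟩, rfl⟩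
    rwa [Nat.sub_add_cancel (Nat.pos_of_ne_zero hy0)]
  · exact fun h => ⟨x + 1, ⟨by omega, h⟩, rfl⟩

theorem exists_of_mem_fv_ren {ρ : ℕ → ℕ} {t : Lam} {x : ℕ} (hx : x ∈ fv (ren ρ t)) :
    ∃ y ∈ fv t, ρ y = x := by
  induction t generalizing ρ x with
  | var n => exact ⟨n, by simp [fv], by simpa [ren, fv, eq_comm] using hx⟩
  | app a b iha ihb =>
    simp only [ren, fv, Finset.mem_union] at hx
    rcases hx with hx | hx
    · obtain ⟨y, hy, rfl⟩ := iha hx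
      exact ⟨y, Finset.mem_union_left _ hy, rfl⟩
    · obtain ⟨y, hy, rfl⟩ := ihb hx
      exact ⟨y, Finset.mem_union_right _ hy, rfl⟩
  | lam a ih =>
    obtain ⟨y, hy, hyx⟩ := ih (mem_fv_lam.1 hx)
    cases y with
    | zero => simp [upRen] at hyx
    | succ y => exact ⟨y, mem_fv_lam.2 hy, by simpa [upRen] using hyx⟩

theorem exists_of_mem_fv_msubst {σ : ℕ → Lam} {t : Lam} {x : ℕ} (hx : x ∈ fv (msubst σ t)) :
    ∃ y ∈ fv t, x ∈ fv (σ y) := by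
  induction t generalizing σ x with
  | var n => exact ⟨n, by simp [fv], hx⟩
  | app a b iha ihb =>
    simp only [msubst, fv, Finset.mem_union] at hx
    rcases hx with hx | hx
    · obtain ⟨y, hy, hxy⟩ := iha hx
      exact ⟨y, Finset.mem_union_left _ hy, hxy⟩
    · obtain ⟨y, hy, hxy⟩ := ihb hx
      exact ⟨y, Finset.mem_union_right _ hy, hxy⟩
  | lam a ih =>
    obtain ⟨y, hy, hxy⟩ := ih (mem_fv_lam.1 hx)
    cases y with
    | zero => simp [upSubst, fv] at hxy
    | succ y =>
      obtain ⟨z, hz, hzx⟩ := exists_of_mem_fv_ren hxy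
      exact ⟨y, mem_fv_lam.2 hy, Nat.succ_injective hzx ▸ hz⟩

theorem msubst_congr_fv {σ σ' : ℕ → Lam} {t : Lam} (h : ∀ y ∈ fv t, σ y = σ' y) :
    msubst σ t = msubst σ' t := by
  induction t generalizing σ σ' with
  | var n => exact h n (by simp [fv])
  | app a b iha ihb =>
    simp only [msubst, fv, Finset.mem_union] at h ⊢
    rw [iha fun y hy => h y (.inl hy), ihb fun y hy => h y (.inr hy)]
  | lam a ih =>
    refine congrArg lam (ih fun y hy => ?_)
    cases y with
    | zero => rfl
    | succ y => exact congrArg (ren Nat.succ) (h y (mem_fv_lam.2 hy))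

theorem Whr.msubst {t u : Lam} (h : Whr t u) (σ : ℕ → Lam) :
    Whr (msubst σ t) (msubst σ u) := by
  induction h with
  | head t u => rw [msubst_subst_zero]; exact .head _ _
  | appL u _ ih => exact .appL _ ih

theorem Whr.toBeta {t u : Lam} (h : Whr t u) : Beta t u := by
  induction h with
  | head t u => exact .beta t u
  | appL u _ ih => exact .appL u ih

theorem WhrStar.msubst {t u : Lam} (h : WhrStar t u) (σ : ℕ → Lam) :
    WhrStar (msubst σ t) (msubst σ u) :=
  Relation.ReflTransGen.lift (Lam.msubst σ) (fun _ _ h => Whr.msubst h σ) _ _ h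

theorem WhrStar.ren {t u : Lam} (h : WhrStar t u) (ρ : ℕ → ℕ) :
    WhrStar (ren ρ t) (ren ρ u) := by
  simpa only [ren_eq_msubst] using h.msubst _

theorem WhrStar.app_left {t t' : Lam} (u : Lam) (h : WhrStar t t') :
    WhrStar (app t u) (app t' u) :=
  Relation.ReflTransGen.lift (Lam.app · u) (fun _ _ h => Whr.appL u h) _ _ h

theorem WhrStar.toBetaStar {t u : Lam} (h : WhrStar t u) : BetaStar t u :=
  Relation.ReflTransGen.mono (fun _ _ h => Whr.toBeta h) _ _ h

theorem BetaStar.app {t t' u u' : Lam} (ht : BetaStar t t') (hu : BetaStar u u') :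
    BetaStar (app t u) (app t' u') :=
  (Relation.ReflTransGen.lift (Lam.app · u) (fun _ _ h => Beta.appL u h) _ _ ht).trans
    (Relation.ReflTransGen.lift (Lam.app t') (fun _ _ h => Beta.appR t' h) _ _ hu)

theorem BetaStar.lam {t t' : Lam} (h : BetaStar t t') : BetaStar (lam t) (lam t') :=
  Relation.ReflTransGen.lift Lam.lam (fun _ _ h => Beta.lam h) _ _ h

theorem BetaStar.toBetaEq {t u : Lam} (h : BetaStar t u) : BetaEq t u :=
  Relation.EqvGen.reflTransGen_le_eqvGen _ _ _ h

theorem BetaEq.symm {t u : Lam} (h : BetaEq t u) : BetaEq u t := Relation.EqvGen.symm _ _ h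

theorem BetaEq.trans {t u v : Lam} (h₁ : BetaEq t u) (h₂ : BetaEq u v) : BetaEq t v :=
  Relation.EqvGen.trans _ _ _ h₁ h₂

theorem BetaEq.app {t t' u u' : Lam} (ht : BetaEq t t') (hu : BetaEq u u') :
    BetaEq (app t u) (app t' u') :=
  BetaEq.trans (Relation.EqvGen.lift (Lam.app · u) (fun _ _ h => Beta.appL u h) ht)
    (Relation.EqvGen.lift (Lam.app t') (fun _ _ h => Beta.appR t' h) hu)

theorem Beta.fv_subset {t u : Lam} (h : Beta t u) : fv u ⊆ fv t := by
  induction h with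
  | beta t u =>
    intro x hx
    rw [subst_eq_msubst] at hx
    obtain ⟨y, hy, hxy⟩ := exists_of_mem_fv_msubst hx
    simp only [fv, Finset.mem_union]
    cases y with
    | zero => exact .inr hxy
    | succ y =>
      rw [substFn_zero_succ, fv, Finset.mem_singleton] at hxy
      exact .inl (mem_fv_lam.2 (hxy ▸ hy))
  | appL u _ ih => exact Finset.union_subset_union ih subset_rfl
  | appR t _ ih => exact Finset.union_subset_union subset_rfl ih
  | lam _ ih => exact fun x hx => mem_fv_lam.2 (ih (mem_fv_lam.1 hx))

theorem BetaStar.fv_subset {t u : Lam} (h : BetaStar t u) : fv u ⊆ fv t := by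
  induction h with
  | refl => exact subset_rfl
  | tail _ h ih => exact h.fv_subset.trans ih

/-! ### Church–Rosser -/

/-- Parallel β-reduction. -/
inductive Par : Lam → Lam → Prop
  | var (n : ℕ) : Par (var n) (var n)
  | app {t t' u u' : Lam} : Par t t' → Par u u' → Par (app t u) (app t' u')
  | lam {t t' : Lam} : Par t t' → Par (lam t) (lam t')
  | beta {t t' u u' : Lam} : Par t t' → Par u u' → Par (app (lam t) u) (subst t' 0 u')

theorem Par.refl (t : Lam) : Par t t := by
  induction t with
  | var n => exact .var n
  | app a b iha ihb => exact .app iha ihb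
  | lam a ih => exact .lam ih

theorem Par.ren {t t' : Lam} (h : Par t t') (ρ : ℕ → ℕ) : Par (ren ρ t) (ren ρ t') := by
  induction h generalizing ρ with
  | var n => exact .refl _
  | app _ _ ih₁ ih₂ => exact .app (ih₁ ρ) (ih₂ ρ)
  | lam _ ih => exact .lam (ih _)
  | beta _ _ ih₁ ih₂ => rw [ren_subst_zero]; exact .beta (ih₁ _) (ih₂ _)

theorem Par.msubst {t t' : Lam} (h : Par t t') {σ σ' : ℕ → Lam}
    (hσ : ∀ n, Par (σ n) (σ' n)) : Par (msubst σ t) (msubst σ' t') := by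
  have up : ∀ {σ σ' : ℕ → Lam}, (∀ n, Par (σ n) (σ' n)) →
      ∀ n, Par (upSubst σ n) (upSubst σ' n) := by
    intro σ σ' hσ n
    cases n with
    | zero => exact .var 0
    | succ n => exact (hσ n).ren _
  induction h generalizing σ σ' with
  | var n => exact hσ n
  | app _ _ ih₁ ih₂ => exact .app (ih₁ hσ) (ih₂ hσ)
  | lam _ ih => exact .lam (ih (up hσ))
  | beta _ _ ih₁ ih₂ => rw [msubst_subst_zero]; exact .beta (ih₁ (up hσ)) (ih₂ hσ)

theorem Par.subst_zero {t t' u u' : Lam} (ht : Par t t') (hu : Par u u') :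
    Par (subst t 0 u) (subst t' 0 u') := by
  rw [subst_eq_msubst, subst_eq_msubst]
  refine ht.msubst fun n => ?_
  cases n with
  | zero => exact hu
  | succ n => rw [substFn_zero_succ, substFn_zero_succ]; exact .var n

def develop : Lam → Lam
  | var n => var n
  | lam t => lam (develop t)
  | app (lam t) u => subst (develop t) 0 (develop u)
  | app t u => app (develop t) (develop u)

theorem Par.develop {t u : Lam} (h : Par t u) : Par u (develop t) := by
  induction h with
  | var n => exact .var n
  | lam _ ih => exact .lam ih
  | beta _ _ ih₁ ih₂ => exact ih₁.subst_zero ih₂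
  | @app t t' u u' ht _ ih₁ ih₂ =>
    cases t with
    | var n => exact .app ih₁ ih₂
    | app a b => exact .app ih₁ ih₂
    | lam a =>
      cases ht
      cases ih₁ with
      | lam ih₁ => exact .beta ih₁ ih₂

theorem Beta.par {t u : Lam} (h : Beta t u) : Par t u := by
  induction h with
  | beta t u => exact .beta (.refl t) (.refl u)
  | appL u _ ih => exact .app ih (.refl u)
  | appR t _ ih => exact .app (.refl t) ih
  | lam _ ih => exact .lam ih

theorem Par.betaStar {t u : Lam} (h : Par t u) : BetaStar t u := by
  induction h with
  | var n => exact .refl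
  | app _ _ ih₁ ih₂ => exact ih₁.app ih₂
  | lam _ ih => exact ih.lam
  | beta _ _ ih₁ ih₂ => exact (ih₁.lam.app ih₂).tail (.beta _ _)

theorem reflTransGen_par_eq_betaStar : Relation.ReflTransGen Par = BetaStar :=
  le_antisymm (Relation.reflTransGen_le_of_le (r := Relation.ReflTransGen Beta)
      fun _ _ => Par.betaStar)
    (Relation.ReflTransGen.mono fun _ _ => Beta.par)

theorem BetaStar.church_rosser {t u v : Lam} (hu : BetaStar t u) (hv : BetaStar t v) :
    Relation.Join BetaStar u v := by
  rw [← reflTransGen_par_eq_betaStar] at hu hv ⊢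
  exact Relation.church_rosser (fun t _ _ hu hv => ⟨develop t, .single hu.develop,
    .single hv.develop⟩) hu hv

theorem BetaEq.join {t u : Lam} (h : BetaEq t u) : Relation.Join BetaStar t u := by
  have : IsEquiv Lam (Relation.Join BetaStar) :=
    (Relation.equivalence_join (r := Relation.ReflTransGen Beta)
      fun _ _ _ => BetaStar.church_rosser).isEquiv
  exact Relation.EqvGen.eqvGen_le (fun _ _ h => ⟨_, .single h, .refl⟩) _ _ h

/-! ### Standardization -/

/-- Standard reduction (Kashima's formulation): weak head reduction to a head form whose
immediate subterms are reduced standardly in turn. -/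
inductive StdRed : Lam → Lam → Prop
  | var {M : Lam} {x : ℕ} : WhrStar M (var x) → StdRed M (var x)
  | app {M a b a' b' : Lam} : WhrStar M (app a b) → StdRed a a' → StdRed b b' →
      StdRed M (app a' b')
  | lam {M a a' : Lam} : WhrStar M (lam a) → StdRed a a' → StdRed M (lam a')

namespace StdRed

theorem refl (M : Lam) : StdRed M M := by
  induction M with
  | var n => exact .var .refl
  | app a b iha ihb => exact .app .refl iha ihb
  | lam a ih => exact .lam .refl ih

theorem whrStar_left {M N P : Lam} (hMN : WhrStar M N) (h : StdRed N P) : StdRed M P := by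
  cases h with
  | var h => exact .var (hMN.trans h)
  | app h h₁ h₂ => exact .app (hMN.trans h) h₁ h₂
  | lam h h₁ => exact .lam (hMN.trans h) h₁

theorem ren {M N : Lam} (h : StdRed M N) (ρ : ℕ → ℕ) : StdRed (ren ρ M) (ren ρ N) := by
  induction h generalizing ρ with
  | var h => exact .var (h.ren ρ)
  | app h _ _ ih₁ ih₂ => exact .app (h.ren ρ) (ih₁ ρ) (ih₂ ρ)
  | lam h _ ih => exact .lam (h.ren ρ) (ih _)

theorem msubst {M N : Lam} (h : StdRed M N) {σ σ' : ℕ → Lam}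
    (hσ : ∀ n, StdRed (σ n) (σ' n)) : StdRed (msubst σ M) (msubst σ' N) := by
  induction h generalizing σ σ' with
  | @var M x h => exact whrStar_left (h.msubst σ) (hσ x)
  | app h _ _ ih₁ ih₂ => exact .app (h.msubst σ) (ih₁ hσ) (ih₂ hσ)
  | lam h _ ih =>
    refine .lam (h.msubst σ) (ih fun n => ?_)
    cases n with
    | zero => exact refl _
    | succ n => exact (hσ n).ren _

theorem subst_zero {M M' N N' : Lam} (hM : StdRed M M') (hN : StdRed N N') :
    StdRed (subst M 0 N) (subst M' 0 N') := by
  rw [subst_eq_msubst, subst_eq_msubst]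
  refine hM.msubst fun n => ?_
  cases n with
  | zero => exact hN
  | succ n => rw [substFn_zero_succ, substFn_zero_succ]; exact refl _

theorem beta_right {M N N' : Lam} (h : StdRed M N) (hN : Beta N N') : StdRed M N' := by
  induction hN generalizing M with
  | beta t u =>
    obtain _ | ⟨hM, hlam, hu⟩ := h
    obtain _ | _ | ⟨hlam, ht⟩ := hlam
    exact whrStar_left ((hM.trans (hlam.app_left _)).tail (.head _ _)) (ht.subst_zero hu)
  | appL u _ ih => obtain _ | ⟨hM, h₁, h₂⟩ := h; exact .app hM (ih h₁) h₂
  | appR t _ ih => obtain _ | ⟨hM, h₁, h₂⟩ := h; exact .app hM h₁ (ih h₂)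
  | lam _ ih => obtain _ | _ | ⟨hM, h₁⟩ := h; exact .lam hM (ih h₁)

theorem of_betaStar {M N : Lam} (h : BetaStar M N) : StdRed M N := by
  induction h with
  | refl => exact refl M
  | tail _ hN ih => exact ih.beta_right hN

theorem betaStar {M N : Lam} (h : StdRed M N) : BetaStar M N := by
  induction h with
  | var h => exact h.toBetaStar
  | app h _ _ ih₁ ih₂ => exact h.toBetaStar.trans (ih₁.app ih₂)
  | lam h _ ih => exact h.toBetaStar.trans ih.lam

end StdRed

theorem appList_concat (t u : Lam) (l : List Lam) :
    appList t (l ++ [u]) = app (appList t l) u := by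
  simp [appList]

theorem msubst_appList (σ : ℕ → Lam) (t : Lam) (l : List Lam) :
    msubst σ (appList t l) = appList (msubst σ t) (l.map (msubst σ)) := by
  induction l generalizing t with
  | nil => rfl
  | cons u l ih => exact ih _

theorem fv_subset_fv_appList (t : Lam) (l : List Lam) : fv t ⊆ fv (appList t l) := by
  induction l generalizing t with
  | nil => exact subset_rfl
  | cons u l ih => exact Finset.subset_union_left.trans (ih (app t u))

theorem fv_subset_fv_appList_of_mem {u : Lam} {l : List Lam} (hu : u ∈ l) (t : Lam) :
    fv u ⊆ fv (appList t l) := by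
  induction l generalizing t with
  | nil => cases hu
  | cons a l ih =>
    rcases List.mem_cons.1 hu with rfl | hu
    · exact Finset.subset_union_right.trans (fv_subset_fv_appList (app t u) l)
    · exact ih hu _

theorem appList_var_ne_lam (x : ℕ) (l : List Lam) (s : Lam) : appList (var x) l ≠ lam s := by
  induction l using List.reverseRecOn <;> simp [appList]

theorem not_whr_appList_var (x : ℕ) (l : List Lam) (w : Lam) : ¬ Whr (appList (var x) l) w := by
  induction l using List.reverseRecOn generalizing w with
  | nil => rintro ⟨⟩
  | append_singleton l u ih =>
    rw [appList_concat]
    generalize e : appList (var x) l = s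
    rintro (⟨t, u⟩ | ⟨_, h⟩)
    · exact appList_var_ne_lam x l t e
    · exact ih _ (e ▸ h)

theorem eq_of_whrStar_appList_var {x : ℕ} {l : List Lam} {w : Lam}
    (h : WhrStar (appList (var x) l) w) : w = appList (var x) l :=
  (Relation.reflTransGen_iff_eq (not_whr_appList_var x l)).1 h

theorem StdRed.appList_var_left {x : ℕ} {ps : List Lam} {v : Lam}
    (h : StdRed (appList (Lam.var x) ps) v) :
    ∃ qs, v = appList (Lam.var x) qs ∧ List.Forall₂ StdRed ps qs := by
  induction ps using List.reverseRecOn generalizing v with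
  -- The spine has no weak head redex, so only its arguments can be reduced.
  | nil =>
    obtain ⟨hw⟩ | ⟨hw⟩ | ⟨hw⟩ := h <;> cases eq_of_whrStar_appList_var (l := []) hw
    exact ⟨[], rfl, .nil⟩
  | append_singleton l u ih =>
    obtain ⟨hw⟩ | ⟨hw, ha, hb⟩ | ⟨hw⟩ := h <;>
      have hw := eq_of_whrStar_appList_var hw <;> rw [appList_concat] at hw <;> cases hw
    obtain ⟨qs, rfl, hqs⟩ := ih ha
    exact ⟨qs ++ [_], (appList_concat _ _ _).symm, List.rel_append hqs (.cons hb .nil)⟩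

theorem StdRed.exists_whrStar_appList_var {x : ℕ} {qs : List Lam} {M : Lam}
    (h : StdRed M (appList (Lam.var x) qs)) :
    ∃ ss, WhrStar M (appList (Lam.var x) ss) ∧ List.Forall₂ StdRed ss qs := by
  induction qs using List.reverseRecOn generalizing M with
  | nil => obtain ⟨h⟩ := h; exact ⟨[], h, .nil⟩
  | append_singleton l q ih =>
    rw [appList_concat] at h
    obtain _ | ⟨hM, ha, hb⟩ := h
    obtain ⟨ss, hss, hf⟩ := ih ha
    refine ⟨ss ++ [_], ?_, List.rel_append hf (.cons hb .nil)⟩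
    rw [appList_concat]
    exact hM.trans (hss.app_left _)

theorem BetaEq.exists_whrStar_appList_var {t : Lam} {x : ℕ} {ps : List Lam}
    (h : BetaEq t (appList (var x) ps)) :
    ∃ ss, WhrStar t (appList (var x) ss) ∧ List.Forall₂ BetaEq ss ps := by
  -- Church–Rosser, then standardization of both reductions to the common reduct.
  obtain ⟨v, htv, hpv⟩ := h.join
  obtain ⟨qs, rfl, hpq⟩ := (StdRed.of_betaStar hpv).appList_var_left
  obtain ⟨ss, hss, hsq⟩ := (StdRed.of_betaStar htv).exists_whrStar_appList_var
  refine ⟨ss, hss, hsq.comp (fun s q p hsq hpq => ?_) hpq.flip⟩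
  exact hsq.betaStar.toBetaEq.trans hpq.betaStar.toBetaEq.symm

end Lam

/-! ### Types and their interpretation -/

namespace Ty

theorem mem_fv_all {A : Ty} {x : ℕ} : x ∈ fv (all A) ↔ x + 1 ∈ fv A := by
  simp only [fv, Finset.mem_image, Finset.mem_erase]
  constructor
  · rintro ⟨y, ⟨hy0, hyA⟩, rfl⟩
    rwa [Nat.sub_add_cancel (Nat.pos_of_ne_zero hy0)]
  · exact fun h => ⟨x + 1, ⟨by omega, h⟩, rfl⟩

theorem lift_var_zero (Y : ℕ) : lift 0 (var Y) = var (Y + 1) := rfl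

theorem mem_fv_subst_var_of_lt {A : Ty} {m k Y : ℕ} (h : m ∈ A.fv) (hm : m < k) :
    m ∈ (A.subst k (var Y)).fv := by
  induction A generalizing m k Y with
  | var n =>
    rw [fv, Finset.mem_singleton] at h
    subst h
    simp [subst, fv, show m ≠ k by omega, show ¬ k < m by omega]
  | arr A B ihA ihB =>
    simp only [fv, subst, Finset.mem_union] at h ⊢
    exact h.imp (ihA · hm) (ihB · hm)
  | all A ih =>
    rw [mem_fv_all] at h
    rw [subst, lift_var_zero, mem_fv_all]
    exact ih h (by omega)

def size : Ty → ℕ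
  | var _ => 1
  | arr A B => size A + size B + 1
  | all A => size A + 1

theorem size_subst_var (A : Ty) (k Y : ℕ) : size (A.subst k (var Y)) = size A := by
  induction A generalizing k Y with
  | var n => simp only [subst]; split_ifs <;> rfl
  | arr A B ihA ihB => simp [subst, size, ihA, ihB]
  | all A ih => simp [subst, size, lift_var_zero, ih]

/-- An injective coding of types which, unlike an arbitrary one, bounds their free variables. -/
def code : Ty → ℕ
  | var n => 3 * n
  | arr A B => 3 * Nat.pair (code A) (code B) + 1
  | all A => 3 * code A + 2

theorem code_injective : Function.Injective code := by
  intro A B h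
  induction A generalizing B with
  | var n =>
    cases B with
    | var m => simp only [code] at h; rw [show n = m by omega]
    | _ => simp only [code] at h; omega
  | arr C D ihC ihD =>
    cases B with
    | arr C' D' =>
      simp only [code] at h
      have h : Nat.pair (code C) (code D) = Nat.pair (code C') (code D') := by omega
      obtain ⟨hC, hD⟩ := Nat.pair_eq_pair.1 h
      rw [ihC hC, ihD hD]
    | _ => simp only [code] at h; omega
  | all C ihC =>
    cases B with
    | all C' => simp only [code] at h; rw [ihC (show code C = code C' by omega)]
    | _ => simp only [code] at h; omega

theorem le_code_of_mem_fv {B : Ty} {n : ℕ} (h : n ∈ B.fv) : n ≤ code B := by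
  induction B generalizing n with
  | var m =>
    rw [fv, Finset.mem_singleton] at h
    simp only [code]
    omega
  | arr C D ihC ihD =>
    simp only [fv, Finset.mem_union] at h
    have := Nat.left_le_pair (code C) (code D)
    have := Nat.right_le_pair (code C) (code D)
    rcases h with h | h <;> [have := ihC h; have := ihD h] <;> simp only [code] <;> omega
  | all C ihC =>
    have := ihC (mem_fv_all.1 h)
    simp only [code]
    omega

/-- A negative type is `P₁ → ⋯ → Pₘ → X`: `negArgs` lists the `Pᵢ` and `negHead` is `X`. -/
def negArgs : Ty → List Ty
  | arr P B => P :: negArgs B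
  | _ => []

def negHead : Ty → ℕ
  | arr _ B => negHead B
  | var m => m
  | all _ => 0

end Ty

mutual

theorem PosTy.subst_var {A : Ty} (hA : PosTy A) (k Y : ℕ) : PosTy (A.subst k (.var Y)) :=
  match A, hA with
  | _, .var n => by simp only [Ty.subst]; split_ifs <;> exact .var _
  | _, .arr hB hA => .arr (hB.subst_var k Y) (hA.subst_var k Y)
  | _, .all hA hfv =>
    .all (hA.subst_var (k + 1) (Y + 1)) (Ty.mem_fv_subst_var_of_lt hfv k.succ_pos)

theorem NegTy.subst_var {B : Ty} (hB : NegTy B) (k Y : ℕ) : NegTy (B.subst k (.var Y)) :=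
  match B, hB with
  | _, .var n => by simp only [Ty.subst]; split_ifs <;> exact .var _
  | _, .arr hP hB => .arr (hP.subst_var k Y) (hB.subst_var k Y)

end

def Interp.insertAt (k : ℕ) (G : Set Lam) (I : Interp) : Interp :=
  fun n => if n < k then I n else if n = k then G else I (n - 1)

theorem Interp.insertAt_zero (G : Set Lam) (I : Interp) :
    Interp.insertAt 0 G I = Interp.cons G I := by
  funext n
  cases n <;> simp [Interp.insertAt, Interp.cons]

theorem Interp.cons_insertAt (k : ℕ) (G H : Set Lam) (I : Interp) :
    Interp.cons H (Interp.insertAt k G I) = Interp.insertAt (k + 1) G (Interp.cons H I) := by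
  funext n
  rcases n with _ | _ | n
  · rfl
  · cases k <;> rfl
  · simp only [Interp.insertAt, Interp.cons]
    split_ifs <;> first | rfl | omega

section interpC

variable {C : Set Lam → Prop}

theorem interpC_congr (A : Ty) {I J : Interp} (h : ∀ n ∈ A.fv, I n = J n) :
    interpC C A I = interpC C A J := by
  induction A generalizing I J with
  | var n => exact h n (Finset.mem_singleton_self n)
  | arr B A ihB ihA =>
    simp only [Ty.fv, Finset.mem_union] at h
    simp only [interpC, ihB fun n hn => h n (.inl hn), ihA fun n hn => h n (.inr hn)]
  | all A ih =>
    refine Set.iInter₂_congr fun G _ => ih fun n hn => ?_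
    cases n with
    | zero => rfl
    | succ n => exact h n (Ty.mem_fv_all.2 hn)

theorem interpC_subst_var (A : Ty) (k Y : ℕ) (I : Interp) :
    interpC C (A.subst k (.var Y)) I = interpC C A (Interp.insertAt k (I Y) I) := by
  induction A generalizing k Y I with
  | var n =>
    show _ = Interp.insertAt k (I Y) I n
    simp only [Ty.subst, Interp.insertAt]
    split_ifs <;> first | rfl | omega
  | arr B A ihB ihA => simp only [Ty.subst, interpC, ihB, ihA]
  | all A ih =>
    refine Set.iInter₂_congr fun G _ => ?_
    rw [Ty.lift_var_zero, ih, Interp.cons_insertAt]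
    rfl

theorem appList_mem_interpC_negHead {B : Ty} (hB : NegTy B) {I : Interp} {v : Lam}
    (hv : v ∈ interpC C B I) {ps : List Lam}
    (hps : List.Forall₂ (fun P p => p ∈ interpC C P I) B.negArgs ps) :
    Lam.appList v ps ∈ I B.negHead := by
  induction B generalizing v ps with
  | var m => cases hps; exact hv
  | arr P B _ ihB =>
    obtain _ | ⟨hp, hps⟩ := hps
    cases hB with
    | arr _ hB => exact ihB hB (hv _ hp) hps
  | all A => cases hB

end interpC

/-! ### The syntactic interpretation -/

/-- The `i`-th variable reserved for the type `B`; all reserved variables are `≥ N₀`. -/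
def resVar (N₀ : ℕ) (B : Ty) (i : ℕ) : ℕ := N₀ + Nat.pair B.code i

section resVar

variable {N₀ : ℕ}

theorem resVar_inj {B B' : Ty} {i i' : ℕ} (h : resVar N₀ B i = resVar N₀ B' i') :
    B = B' ∧ i = i' := by
  obtain ⟨hB, hi⟩ := Nat.pair_eq_pair.1 (Nat.add_left_cancel h)
  exact ⟨Ty.code_injective hB, hi⟩

theorem le_resVar (B : Ty) (i : ℕ) : N₀ ≤ resVar N₀ B i := Nat.le_add_right _ _

theorem index_le_resVar (B : Ty) (i : ℕ) : i ≤ resVar N₀ B i :=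
  (Nat.right_le_pair _ _).trans (Nat.le_add_left _ _)

theorem le_resVar_of_mem_fv {B : Ty} {m : ℕ} (h : m ∈ B.fv) (i : ℕ) : m ≤ resVar N₀ B i :=
  (Ty.le_code_of_mem_fv h).trans ((Nat.left_le_pair _ _).trans (Nat.le_add_left _ _))

theorem exists_resVar_notMem_fv (B : Ty) (t : Lam) : ∃ j, resVar N₀ B j ∉ t.fv := by
  obtain ⟨n, hn⟩ := t.fv.exists_nat_subset_range
  exact ⟨n, fun h => (Finset.mem_range.1 (hn h)).not_ge (index_le_resVar B n)⟩

end resVar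

/-- `Canon N₀ A t`: hereditarily up to weak head reduction, `t` is an η-long normal inhabitant
of `A` whose head variables are reserved ones. -/
inductive Canon (N₀ : ℕ) : Ty → Lam → Prop
  | spine {B : Ty} {i : ℕ} {w : Lam} {ps : List Lam} :
      NegTy B → Lam.WhrStar w (Lam.appList (.var (resVar N₀ B i)) ps) →
      B.negArgs.length = ps.length → (∀ P p, (P, p) ∈ B.negArgs.zip ps → Canon N₀ P p) →
      Canon N₀ (.var B.negHead) w
  | arr {B A : Ty} {t : Lam} :
      (∀ j, Canon N₀ A (.app t (.var (resVar N₀ B j)))) → Canon N₀ (.arr B A) t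
  | all {A : Ty} {t : Lam} : (∀ Y, Canon N₀ (A.subst 0 (.var Y)) t) → Canon N₀ (.all A) t

def synInterp (N₀ : ℕ) : Interp := fun n => {w | Canon N₀ (.var n) w}

theorem synInterp_saturated (N₀ n : ℕ) : Saturated (synInterp N₀ n) := by
  rintro t u htu ⟨hB, hw, hlen, hps⟩
  exact .spine hB (htu.trans hw) hlen hps

section completeness

variable {N₀ : ℕ}

mutual

theorem Canon.of_mem_synInterp {A : Ty} (hA : PosTy A) {t : Lam}
    (ht : t ∈ interpC Saturated A (synInterp N₀)) : Canon N₀ A t :=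
  match A, hA with
  | _, .var _ => ht
  | _, .arr hB hA => .arr fun j =>
      Canon.of_mem_synInterp hA (ht _ (appList_resVar_mem_synInterp hB (i := j) hB
        (pre := []) rfl rfl .nil))
  | _, .all hA _ => .all fun Y => by
      refine Canon.of_mem_synInterp (hA.subst_var 0 Y) ?_
      rw [interpC_subst_var, Interp.insertAt_zero]
      exact Set.mem_iInter₂.1 ht _ (synInterp_saturated N₀ Y)
termination_by A.size
decreasing_by all_goals simp only [Ty.size, Ty.size_subst_var]; omega

/-- A reserved variable of the negative type `B₀`, applied to canonical arguments for the first
argument types of `B₀`, realizes the remaining type `B` in the syntactic interpretation. -/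
theorem appList_resVar_mem_synInterp {B : Ty} (hB : NegTy B) {B₀ : Ty} {i : ℕ}
    {pre : List Ty} {qs : List Lam} (hB₀ : NegTy B₀) (hargs : B₀.negArgs = pre ++ B.negArgs)
    (hhead : B₀.negHead = B.negHead) (hqs : List.Forall₂ (Canon N₀) pre qs) :
    Lam.appList (.var (resVar N₀ B₀ i)) qs ∈ interpC Saturated B (synInterp N₀) :=
  match B, hB with
  | .var m, .var _ => by
    have hargs : B₀.negArgs = pre := by simpa [Ty.negArgs] using hargs
    rw [← hargs] at hqs
    show Canon N₀ (.var m) _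
    rw [show m = B₀.negHead from hhead.symm]
    exact Canon.spine hB₀ .refl hqs.length_eq fun _ _ => List.forall₂_zip hqs
  | .arr P _, .arr hP hB => fun p hp => by
    have h := appList_resVar_mem_synInterp hB hB₀ (i := i) (pre := pre ++ [P])
      (qs := qs ++ [p]) (by simp [hargs, Ty.negArgs]) hhead
      (List.rel_append hqs (.cons (Canon.of_mem_synInterp hP hp) .nil))
    rwa [Lam.appList_concat] at h
termination_by B.size
decreasing_by all_goals simp only [Ty.size]; omega

end

end completeness

section adequacy

variable {N₀ : ℕ}

def Covers (N₀ : ℕ) (σ : ℕ → Lam) (I : Interp) (t : Lam) : Prop :=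
  ∀ B i, resVar N₀ B i ∈ t.fv → σ (resVar N₀ B i) ∈ interpC Saturated B I

theorem Covers.of_fv_subset {σ : ℕ → Lam} {I : Interp} {t u : Lam} (h : Covers N₀ σ I t)
    (hu : u.fv ⊆ t.fv) : Covers N₀ σ I u :=
  fun B i hx => h B i (hu hx)

/-- The invariant proved of canonical terms by induction on `Canon`. It quantifies over
substitutions because the `→` case substitutes a realizer for a fresh reserved variable. -/
def BetaRealizes (N₀ : ℕ) (A : Ty) (t₀ : Lam) : Prop :=
  ∀ t, Lam.BetaEq t t₀ → ∀ (I : Interp) (σ : ℕ → Lam), (∀ n, Saturated (I n)) →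
    Covers N₀ σ I t → Lam.msubst σ t ∈ interpC Saturated A I

theorem BetaRealizes.spine {B : Ty} {i : ℕ} {w : Lam} {ps : List Lam} (hB : NegTy B)
    (hw : Lam.WhrStar w (Lam.appList (.var (resVar N₀ B i)) ps))
    (hlen : B.negArgs.length = ps.length)
    (hps : ∀ P p, (P, p) ∈ B.negArgs.zip ps → BetaRealizes N₀ P p) :
    BetaRealizes N₀ (.var B.negHead) w := by
  intro t ht I σ hI hσ
  obtain ⟨ss, hts, hss⟩ := (ht.trans hw.toBetaStar.toBetaEq).exists_whrStar_appList_var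
  have hfv := hts.toBetaStar.fv_subset
  have hx : σ (resVar N₀ B i) ∈ interpC Saturated B I :=
    hσ B i (hfv (Lam.fv_subset_fv_appList _ _ (Finset.mem_singleton_self _)))
  have hps : List.Forall₂ (BetaRealizes N₀) B.negArgs ps :=
    List.forall₂_iff_zip.2 ⟨hlen, hps _ _⟩
  have hsub : List.Forall₂ (fun _ s => s.fv ⊆ t.fv) B.negArgs ss :=
    List.forall₂_iff_zip.2 ⟨hlen.trans hss.length_eq.symm, fun h =>
      (Lam.fv_subset_fv_appList_of_mem (List.of_mem_zip h).2 _).trans hfv⟩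
  have hargs : List.Forall₂ (fun P p => p ∈ interpC Saturated P I) B.negArgs
      (ss.map (Lam.msubst σ)) := by
    have hreal : List.Forall₂ (fun P s => ∃ p, BetaRealizes N₀ P p ∧ Lam.BetaEq s p)
        B.negArgs ss :=
      hps.comp (fun _ _ _ hr hsp => ⟨_, hr, hsp⟩) hss.flip
    refine List.forall₂_map_right_iff.2 (hreal.mp ?_ hsub)
    rintro P s ⟨p, hp, hsp⟩ hs
    exact hp s hsp I σ hI (hσ.of_fv_subset hs)
  have hred := hts.msubst σ
  rw [Lam.msubst_appList] at hred
  exact hI _ _ _ hred (appList_mem_interpC_negHead hB hx hargs)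

theorem BetaRealizes.arr {B A : Ty} {t₀ : Lam}
    (h : ∀ j, BetaRealizes N₀ A (.app t₀ (.var (resVar N₀ B j)))) :
    BetaRealizes N₀ (.arr B A) t₀ := by
  intro t ht I σ hI hσ v hv
  obtain ⟨j, hj⟩ := exists_resVar_notMem_fv (N₀ := N₀) B t
  have hcov :
      Covers N₀ (Function.update σ (resVar N₀ B j) v) I (.app t (.var (resVar N₀ B j))) := by
    intro B' i' hmem
    rcases Finset.mem_union.1 hmem with hmem | hmem
    · rw [Function.update_of_ne (ne_of_mem_of_not_mem hmem hj)]
      exact hσ B' i' hmem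
    · obtain ⟨rfl, rfl⟩ := resVar_inj (Finset.mem_singleton.1 hmem)
      rwa [Function.update_self]
  have hsubst :
      Lam.msubst (Function.update σ (resVar N₀ B j) v) (.app t (.var (resVar N₀ B j))) =
        .app (Lam.msubst σ t) v := by
    refine congrArg₂ Lam.app (Lam.msubst_congr_fv fun y hy => ?_) (Function.update_self _ _ _)
    exact Function.update_of_ne (ne_of_mem_of_not_mem hy hj) _ _
  simpa only [hsubst] using h j _ (ht.app (Relation.EqvGen.refl _)) I _ hI hcov

theorem BetaRealizes.all {A : Ty} {t₀ : Lam}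
    (h : ∀ Y, BetaRealizes N₀ (A.subst 0 (.var Y)) t₀) : BetaRealizes N₀ (.all A) t₀ := by
  intro t ht I σ hI hσ
  refine Set.mem_iInter₂.2 fun G hG => ?_
  obtain ⟨Y, hY⟩ := ((Ty.all A).fv ∪ t.fv).exists_nat_subset_range
  have hfresh : ∀ n ∈ (Ty.all A).fv ∪ t.fv, n ≠ Y := fun n hn =>
    (Finset.mem_range.1 (hY hn)).ne
  let I' : Interp := fun n => if n = Y then G else I n
  have hI' : ∀ n, Saturated (I' n) := by
    intro n
    dsimp only [I']
    split_ifs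
    exacts [hG, hI n]
  have hcov : Covers N₀ σ I' t := by
    intro B i hmem
    rw [interpC_congr (J := I) B fun m hm => if_neg ?_]
    · exact hσ B i hmem
    · exact ne_of_lt ((le_resVar_of_mem_fv hm i).trans_lt
        (Finset.mem_range.1 (hY (Finset.mem_union_right _ hmem))))
  have hA := h Y t ht I' σ hI' hcov
  rw [interpC_subst_var, Interp.insertAt_zero, show I' Y = G from if_pos rfl] at hA
  refine interpC_congr A (fun n hn => ?_) ▸ hA
  cases n with
  | zero => rfl
  | succ n => exact if_neg (hfresh n (Finset.mem_union_left _ (Ty.mem_fv_all.2 hn)))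

theorem Canon.betaRealizes {A : Ty} {t₀ : Lam} (h : Canon N₀ A t₀) : BetaRealizes N₀ A t₀ := by
  induction h with
  | spine hB hw hlen _ ih => exact .spine hB hw hlen ih
  | arr _ ih => exact .arr ih
  | all _ ih => exact .all ih

end adequacy

/-- Corollary 1(ii): for `A` a ∀⁺ type, `|A|` is stable under
β-equivalence. -/
theorem sem_beta_stable (A : Ty) (hA : PosTy A) (t t' : Lam)
    (ht : t ∈ Sem A) (heq : Lam.BetaEq t t') : t' ∈ Sem A := by
  intro I hI
  obtain ⟨N₀, hN₀⟩ := t'.fv.exists_nat_subset_range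
  have hcanon : Canon N₀ A t := Canon.of_mem_synInterp hA (ht _ (synInterp_saturated N₀))
  have hcov : Covers N₀ Lam.var I t' := fun B i hmem =>
    absurd (Finset.mem_range.1 (hN₀ hmem)) (le_resVar B i).not_gt
  simpa only [Lam.msubst_var] using hcanon.betaRealizes t' heq.symm I Lam.var hI hcov
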